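/- arXiv:1310.8464 — 2 statements merged into one kernel-verified Lean document; each statement's English description precedes it below -/
import Mathlib

section
/- With K as in the saddle-center normal form and the implicit relation I1 = I1(I2,E) = (ω/α)I2 - E/α + O(I2²+E²), the following holds: there exist δ₀ > 0 and ĉ > 0 such that for all z = (q1,q2,p1,p2) with q1+p1 ≥ 0, K(z) = E, 0 < E < ĉ|z|², and |z| ≤ δ₀, one has (q1+p1)² ≥ min{ω/α, 1}·|z|²/4. In particular, if δ₀/2 ≤ |z| ≤ δ₀ then q1+p1 ≥ δ₀/c₂ where c₂ = 4/√(min{ω/α,1}). -/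
set_option maxHeartbeats 1000000


/-- On the level set `K = E` of the saddle-center normal form,
with `q₁+p₁ ≥ 0`, `0 < E < ĉ|z|²` and `|z| ≤ δ₀` small, one has
`(q₁+p₁)² ≥ min{ω/α,1}·|z|²/4`; in particular `δ₀/2 ≤ |z| ≤ δ₀` forces
`q₁+p₁ ≥ δ₀/c₂` with `c₂ = 4/√(min{ω/α,1})`. -/
theorem stmt_4 (α ω : ℝ) (hα : 0 < α) (hω : 0 < ω)
    (R : ℝ → ℝ → ℝ) (hR : ContDiff ℝ (⊤ : ℕ∞) (fun p : ℝ × ℝ => R p.1 p.2))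
    (C₀ r : ℝ) (hr : 0 < r)
    (hRO : ∀ I1 I2 : ℝ, I1 ^ 2 + I2 ^ 2 ≤ r → |R I1 I2| ≤ C₀ * (I1 ^ 2 + I2 ^ 2))
    (K : ℝ × ℝ × ℝ × ℝ → ℝ)
    (hK : ∀ q1 q2 p1 p2 : ℝ,
      K (q1, q2, p1, p2) =
        -α * (q1 * p1) + ω * ((q2 ^ 2 + p2 ^ 2) / 2)
          + R (q1 * p1) ((q2 ^ 2 + p2 ^ 2) / 2)) :
    ∃ δ₀ > 0, ∃ chat > 0, ∀ q1 q2 p1 p2 E : ℝ,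
      0 ≤ q1 + p1 →
      K (q1, q2, p1, p2) = E →
      0 < E →
      E < chat * (q1 ^ 2 + q2 ^ 2 + p1 ^ 2 + p2 ^ 2) →
      q1 ^ 2 + q2 ^ 2 + p1 ^ 2 + p2 ^ 2 ≤ δ₀ ^ 2 →
      (q1 + p1) ^ 2 ≥ min (ω / α) 1 * (q1 ^ 2 + q2 ^ 2 + p1 ^ 2 + p2 ^ 2) / 4 ∧
      ((δ₀ / 2) ^ 2 ≤ q1 ^ 2 + q2 ^ 2 + p1 ^ 2 + p2 ^ 2 →
        q1 + p1 ≥ δ₀ / (4 / Real.sqrt (min (ω / α) 1))) := by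
  set m := min (ω / α) 1 with hm
  have hm0 : 0 < m := lt_min (div_pos hω hα) one_pos
  have hm1 : m ≤ 1 := min_le_right _ _
  have hmα : m * α ≤ ω := by
    have h := min_le_left (ω / α) 1
    have : m * α ≤ (ω / α) * α := by nlinarith
    rwa [div_mul_cancel₀ _ (ne_of_gt hα)] at this
  set C := max C₀ 1 with hCdef
  have hC0 : (0:ℝ) < C := lt_of_lt_of_le one_pos (le_max_right _ _)
  have hC₀C : C₀ ≤ C := le_max_left _ _
  set D := min (m * α / (2 * C)) (Real.sqrt (2 * r)) with hDdef
  have hD0 : 0 < D := lt_min (by positivity) (Real.sqrt_pos.mpr (by linarith))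
  have hDle : D ≤ m * α / (2 * C) := min_le_left _ _
  have hDle2 : D ≤ Real.sqrt (2 * r) := min_le_right _ _
  clear_value D
  refine ⟨Real.sqrt D, Real.sqrt_pos.mpr hD0, α * m / 8, by positivity, ?_⟩
  intro q1 q2 p1 p2 E hqp hKE hE0 hEchat hS
  have hsqD : Real.sqrt D ^ 2 = D := Real.sq_sqrt hD0.le
  rw [hsqD] at hS
  rw [hK] at hKE
  set S := q1 ^ 2 + q2 ^ 2 + p1 ^ 2 + p2 ^ 2 with hSdef
  have hS0 : 0 ≤ S := by positivity
  clear_value m C S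
  have hu_le : |q1 * p1| ≤ S / 2 := by
    rw [abs_le]
    constructor <;> nlinarith [sq_nonneg (q1 + p1), sq_nonneg (q1 - p1), sq_nonneg q2, sq_nonneg p2]
  obtain ⟨hul, hur⟩ := abs_le.mp hu_le
  have hI2l : (0:ℝ) ≤ (q2 ^ 2 + p2 ^ 2) / 2 := by positivity
  have hI2r : (q2 ^ 2 + p2 ^ 2) / 2 ≤ S / 2 := by nlinarith [sq_nonneg q1, sq_nonneg p1]
  have hSr : S ^ 2 / 2 ≤ r := by
    have h1 : S ≤ Real.sqrt (2 * r) := le_trans hS hDle2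
    have h2 : S ^ 2 ≤ Real.sqrt (2 * r) ^ 2 := pow_le_pow_left₀ hS0 h1 2
    rw [Real.sq_sqrt (by linarith : (0:ℝ) ≤ 2 * r)] at h2
    linarith
  have hsum : (q1 * p1) ^ 2 + ((q2 ^ 2 + p2 ^ 2) / 2) ^ 2 ≤ S ^ 2 / 2 := by
    nlinarith [sq_abs (q1 * p1)]
  have harg : (q1 * p1) ^ 2 + ((q2 ^ 2 + p2 ^ 2) / 2) ^ 2 ≤ r := le_trans hsum hSr
  have hRb : |R (q1 * p1) ((q2 ^ 2 + p2 ^ 2) / 2)| ≤ C * S ^ 2 / 2 := by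
    calc |R (q1 * p1) ((q2 ^ 2 + p2 ^ 2) / 2)|
        ≤ C₀ * ((q1 * p1) ^ 2 + ((q2 ^ 2 + p2 ^ 2) / 2) ^ 2) := hRO _ _ harg
      _ ≤ C * (S ^ 2 / 2) := by
          nlinarith [sq_nonneg (q1 * p1), sq_nonneg ((q2 ^ 2 + p2 ^ 2) / 2)]
      _ = C * S ^ 2 / 2 := by ring
  have hRlb : -(C * S ^ 2 / 2) ≤ R (q1 * p1) ((q2 ^ 2 + p2 ^ 2) / 2) := (abs_le.mp hRb).1
  have key : α * (q1 + p1) ^ 2 =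
      α * (q1 ^ 2 + p1 ^ 2) + 2 * ω * ((q2 ^ 2 + p2 ^ 2) / 2)
        + 2 * R (q1 * p1) ((q2 ^ 2 + p2 ^ 2) / 2) - 2 * E := by
    linear_combination (-2 : ℝ) * hKE
  have hCS : C * S ≤ m * α / 2 := by
    have h := le_trans hS hDle
    calc C * S ≤ C * (m * α / (2 * C)) := by nlinarith
      _ = m * α / 2 := by field_simp
  have hCS2 : C * S ^ 2 ≤ m * α * S / 2 := by nlinarith [mul_le_mul_of_nonneg_right hCS hS0]
  have hEb : 2 * E ≤ α * m * S / 4 := by linarith only [hEchat]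
  have hq1p1 : α * (q1 ^ 2 + p1 ^ 2) ≥ α * m * (q1 ^ 2 + p1 ^ 2) := by
    linarith only [mul_nonneg (mul_nonneg hα.le (sub_nonneg.mpr hm1))
      (add_nonneg (sq_nonneg q1) (sq_nonneg p1))]
  have h2ω : 2 * ω * ((q2 ^ 2 + p2 ^ 2) / 2) ≥ α * m * (q2 ^ 2 + p2 ^ 2) := by
    linarith only [mul_le_mul_of_nonneg_right hmα
      (by positivity : (0:ℝ) ≤ q2 ^ 2 + p2 ^ 2)]
  have hmain : α * (q1 + p1) ^ 2 ≥ α * m * S / 4 := by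
    rw [hSdef] at hCS2 hEb hRlb ⊢
    linarith only [key, hq1p1, h2ω, hCS2, hEb, hRlb]
  have hgoal1 : (q1 + p1) ^ 2 ≥ m * S / 4 := by
    have h' : α * (m * S / 4) ≤ α * (q1 + p1) ^ 2 := by linarith only [hmain]
    exact le_of_mul_le_mul_left h' hα
  refine ⟨hgoal1, ?_⟩
  intro hlow
  have hsm0 : 0 < Real.sqrt m := Real.sqrt_pos.mpr hm0
  have hsqm : Real.sqrt m ^ 2 = m := Real.sq_sqrt hm0.le
  have hrw : Real.sqrt D / (4 / Real.sqrt m) = Real.sqrt D * Real.sqrt m / 4 := by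
    field_simp
  rw [hrw]
  have hlow' : (q1 + p1) ^ 2 ≥ D * m / 16 := by
    have h4 : (Real.sqrt D / 2) ^ 2 = D / 4 := by rw [div_pow, hsqD]; norm_num
    rw [h4] at hlow
    have h5 : m * (D / 4) ≤ m * S := mul_le_mul_of_nonneg_left hlow hm0.le
    linarith only [hgoal1, h5]
  have hb0 : 0 ≤ Real.sqrt D * Real.sqrt m / 4 := by positivity
  have hb2 : (Real.sqrt D * Real.sqrt m / 4) ^ 2 = D * m / 16 := by
    rw [div_pow, mul_pow, hsqD, hsqm]; norm_num
  calc Real.sqrt D * Real.sqrt m / 4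
      = Real.sqrt ((Real.sqrt D * Real.sqrt m / 4) ^ 2) := (Real.sqrt_sq hb0).symm
    _ ≤ Real.sqrt ((q1 + p1) ^ 2) := Real.sqrt_le_sqrt (by rw [hb2]; exact hlow')
    _ = q1 + p1 := Real.sqrt_sq hqp
end

section
/- Let Aη = -J₀η' - Sη be the asymptotic operator on W^{1,2}(S¹, ℝ²) where J₀ = [[0,-1],[1,0]] and S(t) is a continuous loop of symmetric matrices, and suppose e : S¹ → ℝ² is a nonvanishing eigensection, Ae = μe. Then the winding number of the loop t ↦ e(t) ∈ ℝ²∖{0} is well-defined and independent of the choice of nonvanishing eigensection in the μ-eigenspace: any two nonvanishing solutions e₁, e₂ of -J₀e' - Se = μe are pointwise linearly independent or proportional, and if pointwise linearly independent their winding numbers coincide; if proportional they trivially coincide. (Special case: every nontrivial solution of the linear ODE e' = J₀(S+μ)e on S¹ is nowhere vanishing.) -/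
/-!
Eigensections solve the linear ODE `e' = J₀(S + μ)e`, so by Grönwall they are determined by
their value at a single time; this gives the nonvanishing of nontrivial solutions, and together
with the constancy of the Wronskian `e₁ ∧ e₂` (as `J₀(S + μ)` is traceless) the dichotomy
between proportional and pointwise independent solutions.

For the winding numbers, write `eᵢ = ρᵢ (cos θᵢ, sin θᵢ)`. The Wronskian equals
`ρ₁ ρ₂ sin (θ₂ - θ₁)`, so `sin (θ₂ - θ₁)` has constant sign (possibly zero), and the continuous
function `θ₂ - θ₁` cannot move by `π` or more: it would pass through a zero of `sin` and a point
where `sin` is `±1`. Both `θ₁` and `θ₂` increase by multiples of `2π` along the loop, hence by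
the same multiple.
-/

/-- An eigensection of the asymptotic operator `Aη = -J₀η' - Sη` with eigenvalue
`μ`, i.e. a solution of the linear ODE `e' = J₀(S(t) + μ)e`, written in
components with `S(t) = [[s11, s12],[s12, s22]]` and `J₀ = [[0,-1],[1,0]]`. -/
def IsEigenSol (s11 s12 s22 : ℝ → ℝ) (μ : ℝ) (e : ℝ → ℝ × ℝ) : Prop :=
  (∀ t, HasDerivAt (fun s => (e s).1)
      (-(s12 t * (e t).1 + s22 t * (e t).2 + μ * (e t).2)) t) ∧
  (∀ t, HasDerivAt (fun s => (e s).2)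
      (s11 t * (e t).1 + s12 t * (e t).2 + μ * (e t).1) t)

open Real Set ContinuousLinearMap

theorem linear_ODE_solution_unique {E : Type*} [NormedAddCommGroup E] [NormedSpace ℝ E]
    {A : ℝ → E →L[ℝ] E} (hA : Continuous A) {f g : ℝ → E}
    (hf : ∀ t, HasDerivAt f (A t (f t)) t) (hg : ∀ t, HasDerivAt g (A t (g t)) t)
    {t₀ : ℝ} (h : f t₀ = g t₀) : f = g := by
  funext t
  obtain ⟨C, hC⟩ := isCompact_Icc.exists_bound_of_continuousOn
    (s := Icc (min t t₀ - 1) (max t t₀ + 1)) hA.continuousOn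
  have hlip : ∀ s ∈ Ioo (min t t₀ - 1) (max t t₀ + 1), LipschitzOnWith C.toNNReal (A s) univ :=
    fun s hs => ((A s).lipschitz.weaken <| by
      rw [← NNReal.coe_le_coe, coe_nnnorm, Real.coe_toNNReal']
      exact (hC s (Ioo_subset_Icc_self hs)).trans (le_max_left _ _)).lipschitzOnWith
  have hmin := min_le_left t t₀
  have hmin' := min_le_right t t₀
  have hmax := le_max_left t t₀
  have hmax' := le_max_right t t₀
  exact ODE_solution_unique_of_mem_Ioo hlip ⟨by linarith, by linarith⟩
    (fun s _ => ⟨hf s, mem_univ _⟩) (fun s _ => ⟨hg s, mem_univ _⟩) h ⟨by linarith, by linarith⟩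

/-- The matrix `J₀(S(t) + μ) = [[-s12, -(s22 + μ)], [s11 + μ, s12]]` of the eigenvalue ODE. -/
noncomputable def asymptoticCoeff (s11 s12 s22 : ℝ → ℝ) (μ t : ℝ) : ℝ × ℝ →L[ℝ] ℝ × ℝ :=
  (-s12 t • fst ℝ ℝ ℝ - (s22 t + μ) • snd ℝ ℝ ℝ).prod
    ((s11 t + μ) • fst ℝ ℝ ℝ + s12 t • snd ℝ ℝ ℝ)

theorem continuous_asymptoticCoeff {s11 s12 s22 : ℝ → ℝ} (hc11 : Continuous s11)
    (hc12 : Continuous s12) (hc22 : Continuous s22) (μ : ℝ) :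
    Continuous (asymptoticCoeff s11 s12 s22 μ) := by
  have : Continuous fun t => (-s12 t • fst ℝ ℝ ℝ - (s22 t + μ) • snd ℝ ℝ ℝ,
      (s11 t + μ) • fst ℝ ℝ ℝ + s12 t • snd ℝ ℝ ℝ) := by fun_prop
  exact (prodₗᵢ ℝ).continuous.comp this

theorem IsEigenSol.hasDerivAt {s11 s12 s22 : ℝ → ℝ} {μ : ℝ} {e : ℝ → ℝ × ℝ}
    (he : IsEigenSol s11 s12 s22 μ e) (t : ℝ) :
    HasDerivAt e (asymptoticCoeff s11 s12 s22 μ t (e t)) t := by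
  refine ((he.1 t).prodMk (he.2 t)).congr_deriv (Prod.ext ?_ ?_) <;>
    simp only [asymptoticCoeff, prod_apply, add_apply, sub_apply, smul_apply, coe_fst', coe_snd',
      smul_eq_mul] <;> ring

theorem IsEigenSol.eq_smul_of_apply_eq_smul {s11 s12 s22 : ℝ → ℝ} (hc11 : Continuous s11)
    (hc12 : Continuous s12) (hc22 : Continuous s22) {μ : ℝ} {e f : ℝ → ℝ × ℝ}
    (he : IsEigenSol s11 s12 s22 μ e) (hf : IsEigenSol s11 s12 s22 μ f) {c t₀ : ℝ}
    (h : f t₀ = c • e t₀) : f = c • e :=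
  linear_ODE_solution_unique (continuous_asymptoticCoeff hc11 hc12 hc22 μ) hf.hasDerivAt
    (fun t => by simpa only [Pi.smul_apply, map_smul] using (he.hasDerivAt t).const_smul c) h

def wronskian (e f : ℝ → ℝ × ℝ) (t : ℝ) : ℝ := (e t).1 * (f t).2 - (e t).2 * (f t).1

/-- Liouville's formula for the traceless matrix `J₀(S + μ)`. -/
theorem IsEigenSol.wronskian_eq {s11 s12 s22 : ℝ → ℝ} {μ : ℝ} {e f : ℝ → ℝ × ℝ}
    (he : IsEigenSol s11 s12 s22 μ e) (hf : IsEigenSol s11 s12 s22 μ f) (t t' : ℝ) :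
    wronskian e f t = wronskian e f t' := by
  have hW : ∀ s, HasDerivAt (wronskian e f) 0 s := fun s =>
    (((he.1 s).mul (hf.2 s)).sub ((he.2 s).mul (hf.1 s))).congr_deriv (by ring)
  exact is_const_of_deriv_eq_zero (fun s => (hW s).differentiableAt) (fun s => (hW s).deriv) t t'

theorem sign_wronskian_eq_sign_sin {e f : ℝ → ℝ × ℝ} {ρ₁ θ₁ ρ₂ θ₂ : ℝ → ℝ} {t : ℝ}
    (he : 0 < ρ₁ t ∧ (e t).1 = ρ₁ t * cos (θ₁ t) ∧ (e t).2 = ρ₁ t * sin (θ₁ t))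
    (hf : 0 < ρ₂ t ∧ (f t).1 = ρ₂ t * cos (θ₂ t) ∧ (f t).2 = ρ₂ t * sin (θ₂ t)) :
    SignType.sign (wronskian e f t) = SignType.sign (sin (θ₂ t - θ₁ t)) := by
  have h : wronskian e f t = ρ₁ t * ρ₂ t * sin (θ₂ t - θ₁ t) := by
    rw [wronskian, he.2.1, he.2.2, hf.2.1, hf.2.2, sin_sub]
    ring
  rw [h, sign_mul, _root_.sign_pos (mul_pos he.1 hf.1), one_mul]

theorem exists_smul_eq_of_mul_sub_mul_eq_zero {x y : ℝ × ℝ} (hx : x ≠ 0)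
    (h : x.1 * y.2 - x.2 * y.1 = 0) : ∃ c : ℝ, y = c • x := by
  by_cases h₁ : x.1 = 0
  · have h₂ : x.2 ≠ 0 := fun h₂ => hx (Prod.ext h₁ h₂)
    refine ⟨y.2 / x.2, Prod.ext ?_ ?_⟩
    · have : x.2 * y.1 = 0 := by simpa [h₁] using h
      simp [h₁, (mul_eq_zero.1 this).resolve_left h₂]
    · simp [h₂]
  · refine ⟨y.1 / x.1, Prod.ext ?_ ?_⟩
    · simp [h₁]
    · simp only [Prod.smul_snd, smul_eq_mul]
      field_simp
      linear_combination h

theorem exists_sub_eq_two_pi_mul_of_polar_eq {r r' θ θ' : ℝ} (hr : 0 < r) (hr' : 0 < r')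
    (hcos : r * cos θ = r' * cos θ') (hsin : r * sin θ = r' * sin θ') :
    ∃ k : ℤ, θ - θ' = 2 * π * k := by
  have hsq : r ^ 2 = r' ^ 2 := by
    linear_combination (r * cos θ + r' * cos θ') * hcos + (r * sin θ + r' * sin θ') * hsin
      - r ^ 2 * sin_sq_add_cos_sq θ + r' ^ 2 * sin_sq_add_cos_sq θ'
  obtain rfl : r = r' := (pow_left_inj₀ hr.le hr'.le two_ne_zero).1 hsq
  exact Real.Angle.angle_eq_iff_two_pi_dvd_sub.1 <| Real.Angle.cos_sin_inj
    (mul_left_cancel₀ hr.ne' hcos) (mul_left_cancel₀ hr.ne' hsin)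

theorem exists_angle_sub_eq_two_pi_mul {g : ℝ → ℝ × ℝ} {ρ θ : ℝ → ℝ} {a b : ℝ}
    (hg : g b = g a)
    (h : ∀ t, 0 < ρ t ∧ (g t).1 = ρ t * cos (θ t) ∧ (g t).2 = ρ t * sin (θ t)) :
    ∃ k : ℤ, θ b - θ a = 2 * π * k :=
  exists_sub_eq_two_pi_mul_of_polar_eq (h b).1 (h a).1
    (by rw [← (h b).2.1, ← (h a).2.1, hg]) (by rw [← (h b).2.2, ← (h a).2.2, hg])

theorem int_eq_zero_of_abs_two_pi_mul_lt_pi {k : ℤ} (h : |2 * π * k| < π) : k = 0 := by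
  rw [abs_mul, abs_of_pos two_pi_pos] at h
  have : |(k : ℝ)| < 1 := by nlinarith [pi_pos]
  exact Int.abs_lt_one_iff.1 (by exact_mod_cast this)

theorem sub_lt_pi_of_sign_sin_eq {D : ℝ → ℝ} {a b : ℝ} (hab : a ≤ b)
    (hD : ContinuousOn D (Icc a b))
    (hsign : ∀ t ∈ Icc a b, SignType.sign (sin (D t)) = SignType.sign (sin (D a))) :
    D b < D a + π := by
  by_contra! hπ
  have hits : ∀ x ∈ Icc (D a) (D a + π), SignType.sign (sin x) = SignType.sign (sin (D a)) := by
    intro x hx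
    obtain ⟨t, ht, rfl⟩ := intermediate_value_Icc hab hD ⟨hx.1, hx.2.trans hπ⟩
    exact hsign t ht
  have hsin : sin (D a) = 0 := by
    have h := hits (D a + π) ⟨by linarith [pi_pos], le_rfl⟩
    rw [sin_add_pi, Left.sign_neg] at h
    rcases lt_trichotomy (sin (D a)) 0 with hlt | heq | hgt
    · simp [_root_.sign_neg hlt] at h
    · exact heq
    · simp [_root_.sign_pos hgt] at h
  have hcos := hits (D a + π / 2) ⟨by linarith [pi_pos], by linarith [pi_pos]⟩
  rw [sin_add_pi_div_two, hsin, _root_.sign_zero, _root_.sign_eq_zero_iff] at hcos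
  nlinarith [sin_sq_add_cos_sq (D a)]

theorem abs_sub_lt_pi_of_sign_sin_eq {D : ℝ → ℝ} {a b : ℝ} (hab : a ≤ b)
    (hD : ContinuousOn D (Icc a b))
    (hsign : ∀ t ∈ Icc a b, SignType.sign (sin (D t)) = SignType.sign (sin (D a))) :
    |D b - D a| < π := by
  have hneg : -D b < -D a + π :=
    sub_lt_pi_of_sign_sin_eq (D := fun t => -D t) hab hD.neg fun t ht => by
      simp only [sin_neg, Left.sign_neg, hsign t ht]
  rw [abs_sub_lt_iff]
  constructor <;> linarith [sub_lt_pi_of_sign_sin_eq hab hD hsign]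

theorem stmt_18_general (s11 s12 s22 : ℝ → ℝ)
    (hc11 : Continuous s11) (hc12 : Continuous s12) (hc22 : Continuous s22)
    (μ : ℝ) :
    (∀ e : ℝ → ℝ × ℝ, IsEigenSol s11 s12 s22 μ e →
      (∃ t₀, e t₀ ≠ 0) → ∀ t, e t ≠ 0) ∧
    (∀ e f : ℝ → ℝ × ℝ, IsEigenSol s11 s12 s22 μ e → IsEigenSol s11 s12 s22 μ f →
      (∀ t, e t ≠ 0) → (∀ t, f t ≠ 0) →
      (∃ c : ℝ, ∀ t, f t = c • e t) ∨
      (∀ t, (e t).1 * (f t).2 - (e t).2 * (f t).1 ≠ 0)) ∧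
    (∀ e f : ℝ → ℝ × ℝ, IsEigenSol s11 s12 s22 μ e → IsEigenSol s11 s12 s22 μ f →
      (∀ t, e (t + 1) = e t) → (∀ t, f (t + 1) = f t) →
      ∀ ρ₁ θ₁ ρ₂ θ₂ : ℝ → ℝ, Continuous θ₁ → Continuous θ₂ →
        (∀ t, 0 < ρ₁ t ∧ (e t).1 = ρ₁ t * Real.cos (θ₁ t) ∧
          (e t).2 = ρ₁ t * Real.sin (θ₁ t)) →
        (∀ t, 0 < ρ₂ t ∧ (f t).1 = ρ₂ t * Real.cos (θ₂ t) ∧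
          (f t).2 = ρ₂ t * Real.sin (θ₂ t)) →
        θ₁ 1 - θ₁ 0 = θ₂ 1 - θ₂ 0) := by
  refine ⟨fun e he ⟨t₀, ht₀⟩ t het => ht₀ ?_, fun e f he hf he0 _ => ?_,
    fun e f he hf hpe hpf ρ₁ θ₁ ρ₂ θ₂ hθ₁ hθ₂ h₁ h₂ => ?_⟩
  · have h0 := IsEigenSol.eq_smul_of_apply_eq_smul hc11 hc12 hc22 he he (c := 0)
      (by rw [het, zero_smul])
    simpa using congrFun h0 t₀
  · by_cases hW : wronskian e f 0 = 0
    · obtain ⟨c, hc⟩ := exists_smul_eq_of_mul_sub_mul_eq_zero (he0 0) hW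
      exact .inl ⟨c, congrFun (IsEigenSol.eq_smul_of_apply_eq_smul hc11 hc12 hc22 he hf hc)⟩
    · exact .inr fun t => by rw [← wronskian, he.wronskian_eq hf t 0]; exact hW
  · have hsign : ∀ t ∈ Icc (0 : ℝ) 1, SignType.sign (sin (θ₂ t - θ₁ t))
        = SignType.sign (sin (θ₂ 0 - θ₁ 0)) := fun t _ => by
      rw [← sign_wronskian_eq_sign_sin (h₁ t) (h₂ t), ← sign_wronskian_eq_sign_sin (h₁ 0) (h₂ 0),
        he.wronskian_eq hf t 0]
    have hlt := abs_sub_lt_pi_of_sign_sin_eq (D := fun t => θ₂ t - θ₁ t) zero_le_one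
      (hθ₂.sub hθ₁).continuousOn hsign
    obtain ⟨k₁, hk₁⟩ := exists_angle_sub_eq_two_pi_mul (by simpa using hpe 0) h₁
    obtain ⟨k₂, hk₂⟩ := exists_angle_sub_eq_two_pi_mul (by simpa using hpf 0) h₂
    have hk : k₂ - k₁ = 0 := int_eq_zero_of_abs_two_pi_mul_lt_pi <| by
      push_cast
      convert hlt using 2
      linear_combination hk₁ - hk₂
    rw [hk₁, hk₂, sub_eq_zero.1 hk]

/-- For the asymptotic operator with symmetric continuous periodic
coefficient loop `S(t)`: (a) every nontrivial solution of `-J₀e' - Se = μe` is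
nowhere vanishing; (b) any two nonvanishing solutions are proportional or
pointwise linearly independent; (c) any two nonvanishing 1-periodic solutions in
the `μ`-eigenspace have the same winding number (total argument variation). -/
theorem stmt_18 (s11 s12 s22 : ℝ → ℝ)
    (hc11 : Continuous s11) (hc12 : Continuous s12) (hc22 : Continuous s22)
    (hper : ∀ t, s11 (t + 1) = s11 t ∧ s12 (t + 1) = s12 t ∧ s22 (t + 1) = s22 t)
    (μ : ℝ) :
    (∀ e : ℝ → ℝ × ℝ, IsEigenSol s11 s12 s22 μ e →
      (∃ t₀, e t₀ ≠ 0) → ∀ t, e t ≠ 0) ∧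
    (∀ e f : ℝ → ℝ × ℝ, IsEigenSol s11 s12 s22 μ e → IsEigenSol s11 s12 s22 μ f →
      (∀ t, e t ≠ 0) → (∀ t, f t ≠ 0) →
      (∃ c : ℝ, ∀ t, f t = c • e t) ∨
      (∀ t, (e t).1 * (f t).2 - (e t).2 * (f t).1 ≠ 0)) ∧
    (∀ e f : ℝ → ℝ × ℝ, IsEigenSol s11 s12 s22 μ e → IsEigenSol s11 s12 s22 μ f →
      (∀ t, e (t + 1) = e t) → (∀ t, f (t + 1) = f t) →
      ∀ ρ₁ θ₁ ρ₂ θ₂ : ℝ → ℝ, Continuous θ₁ → Continuous θ₂ →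
        (∀ t, 0 < ρ₁ t ∧ (e t).1 = ρ₁ t * Real.cos (θ₁ t) ∧
          (e t).2 = ρ₁ t * Real.sin (θ₁ t)) →
        (∀ t, 0 < ρ₂ t ∧ (f t).1 = ρ₂ t * Real.cos (θ₂ t) ∧
          (f t).2 = ρ₂ t * Real.sin (θ₂ t)) →
        θ₁ 1 - θ₁ 0 = θ₂ 1 - θ₂ 0) :=
  stmt_18_general s11 s12 s22 hc11 hc12 hc22 μ
end
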